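/- arXiv:1403.2882 — 5 statements merged into one kernel-verified Lean document; each statement's English description precedes it below -/
import Mathlib

section
/- Let q be a real number with φ < q ≤ 1 + √3. Then for every real number L̄ with 0 ≤ L̄ ≤ q²/(q² - q - 1) there exists a binary sequence u : ℕ → {0,1} such that ∑_{n=0}^∞ u_n f_n / qⁿ = L̄ (the series converging). -/
/-- The Fibonacci-like sequence with `f 0 = f 1 = 1`. -/
def fib1 : ℕ → ℕ
  | 0 => 1
  | 1 => 1
  | n + 2 => fib1 (n + 1) + fib1 n

/-- The golden ratio. -/
noncomputable def phi : ℝ := (1 + Real.sqrt 5) / 2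

theorem fib1_pos : ∀ n, 0 < fib1 n
  | 0 => Nat.one_pos
  | 1 => Nat.one_pos
  | n + 2 => by
      have := fib1_pos n
      simp only [fib1]; omega

theorem fib1_le_succ : ∀ n, fib1 n ≤ fib1 (n + 1)
  | 0 => le_refl _
  | n + 1 => by
      have := fib1_pos n
      show fib1 (n+1) ≤ fib1 (n+1) + fib1 n
      omega

theorem fib1_mul_le (m : ℕ) : ∀ n, fib1 m * fib1 n ≤ fib1 (m + n)
  | 0 => by simp [fib1]
  | 1 => by simpa [fib1] using fib1_le_succ m
  | n + 2 => by
      have h1 := fib1_mul_le m (n + 1)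
      have h2 := fib1_mul_le m n
      show fib1 m * (fib1 (n+1) + fib1 n) ≤ fib1 (m + n + 1) + fib1 (m + n)
      calc fib1 m * (fib1 (n+1) + fib1 n) = fib1 m * fib1 (n+1) + fib1 m * fib1 n := by ring
        _ ≤ fib1 (m + n + 1) + fib1 (m + n) := by
            have he : m + (n + 1) = m + n + 1 := rfl
            rw [he] at h1
            omega

theorem fib1_le_phi_pow : ∀ n, (fib1 n : ℝ) ≤ phi ^ n
  | 0 => by simp [fib1]
  | 1 => by
      have h5 : (1:ℝ) ≤ Real.sqrt 5 := by
        rw [show (1:ℝ) = Real.sqrt 1 by simp]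
        exact Real.sqrt_le_sqrt (by norm_num)
      simp only [fib1, phi, Nat.cast_one, pow_one]
      linarith
  | n + 2 => by
      have h1 := fib1_le_phi_pow (n + 1)
      have h2 := fib1_le_phi_pow n
      have h5 : Real.sqrt 5 ^ 2 = 5 := Real.sq_sqrt (by norm_num)
      have hphi2 : phi ^ 2 = phi + 1 := by
        simp only [phi]; nlinarith [h5]
      have hphipos : (0:ℝ) < phi := by
        simp only [phi]; nlinarith [Real.sqrt_nonneg 5]
      have : (fib1 (n + 2) : ℝ) = (fib1 (n+1) : ℝ) + fib1 n := by
        simp [fib1]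
      rw [this]
      calc (fib1 (n+1) : ℝ) + fib1 n ≤ phi ^ (n+1) + phi ^ n := by linarith
        _ = phi ^ n * (phi + 1) := by ring
        _ = phi ^ n * phi ^ 2 := by rw [hphi2]
        _ = phi ^ (n + 2) := by ring

theorem stmt0 (q : ℝ) (hq1 : phi < q) (hq2 : q ≤ 1 + Real.sqrt 3)
    (L : ℝ) (hL0 : 0 ≤ L) (hL1 : L ≤ q ^ 2 / (q ^ 2 - q - 1)) :
    ∃ u : ℕ → ℝ, (∀ n, u n = 0 ∨ u n = 1) ∧
      HasSum (fun n => u n * (fib1 n : ℝ) / q ^ n) L := by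
  have h5 : Real.sqrt 5 ^ 2 = 5 := Real.sq_sqrt (by norm_num)
  have h5' : (2:ℝ) ≤ Real.sqrt 5 := by nlinarith [Real.sqrt_nonneg 5]
  have hphi1 : (1:ℝ) < phi := by simp only [phi]; linarith
  have hq1' : (1:ℝ) < q := lt_trans hphi1 hq1
  have hqpos : (0:ℝ) < q := by linarith
  have hD : 0 < q ^ 2 - q - 1 := by
    have hs : Real.sqrt 5 < 2 * q - 1 := by
      simp only [phi] at hq1; linarith
    nlinarith [Real.sqrt_nonneg 5]
  set S := q ^ 2 / (q ^ 2 - q - 1) with hSdef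
  have hS2 : (2:ℝ) ≤ S := by
    rw [hSdef, le_div_iff₀ hD]
    have h3 : Real.sqrt 3 ^ 2 = 3 := Real.sq_sqrt (by norm_num)
    have h3' : (0:ℝ) ≤ Real.sqrt 3 := Real.sqrt_nonneg 3
    nlinarith [hq2]
  -- the terms
  set a : ℕ → ℝ := fun n => (fib1 n : ℝ) / q ^ n with ha_def
  have ha_pos : ∀ n, 0 < a n := fun n =>
    div_pos (by exact_mod_cast fib1_pos n) (pow_pos hqpos n)
  have hratio : phi / q < 1 := (div_lt_one hqpos).2 hq1
  have hratio0 : 0 ≤ phi / q := div_nonneg (by linarith) hqpos.le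
  have ha_le : ∀ n, a n ≤ (phi / q) ^ n := by
    intro n
    show (fib1 n : ℝ) / q ^ n ≤ (phi / q) ^ n
    rw [div_pow]
    gcongr
    exact fib1_le_phi_pow n
  have hsum_a : Summable a :=
    Summable.of_nonneg_of_le (fun n => (ha_pos n).le) ha_le
      (summable_geometric_of_lt_one hratio0 hratio)
  -- compute the sum
  have hA : HasSum a S := by
    obtain ⟨A, hA⟩ := hsum_a
    have h1 : HasSum (fun n => a (n + 1)) (A - 1) := by
      rw [hasSum_nat_add_iff 1]
      simpa [ha_def, fib1] using hA
    have h2 : HasSum (fun n => a (n + 2)) (A - 1 - 1 / q) := by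
      rw [hasSum_nat_add_iff 2]
      have : A - 1 - 1/q + ∑ i ∈ Finset.range 2, a i = A := by
        simp [Finset.sum_range_succ, ha_def, fib1]
      rw [this]; exact hA
    have hrec : ∀ n, a (n + 2) = (1 / q) * a (n + 1) + (1 / q ^ 2) * a n := by
      intro n
      simp only [ha_def, fib1]
      push_cast
      field_simp
      ring
    have h3 : HasSum (fun n => (1 / q) * a (n + 1) + (1 / q ^ 2) * a n)
        ((1 / q) * (A - 1) + (1 / q ^ 2) * A) := (h1.mul_left _).add (hA.mul_left _)
    have heq : A - 1 - 1 / q = (1 / q) * (A - 1) + (1 / q ^ 2) * A := by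
      have := h2
      simp_rw [hrec] at this
      exact this.unique h3
    have hAval : A = S := by
      rw [hSdef]
      field_simp at heq ⊢
      rw [eq_div_iff (by nlinarith)]
      nlinarith [heq]
    rwa [hAval] at hA
  -- tails
  set t : ℕ → ℝ := fun n => ∑' k, a (k + n) with ht_def
  have hsum_t : ∀ n, Summable fun k => a (k + n) := fun n =>
    (summable_nat_add_iff n).2 hsum_a
  have ht_nonneg : ∀ n, 0 ≤ t n := fun n =>
    tsum_nonneg fun k => (ha_pos _).le
  have htS : ∀ n, t n = S - ∑ k ∈ Finset.range n, a k := by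
    intro n
    have := Summable.sum_add_tsum_nat_add n hsum_a
    rw [hA.tsum_eq] at this
    rw [ht_def]; linarith
  have ht0 : t 0 = S := by simp [htS 0]
  have ht_succ : ∀ n, t n = a n + t (n + 1) := by
    intro n
    rw [htS n, htS (n + 1), Finset.sum_range_succ]; ring
  have ht_tendsto : Filter.Tendsto t Filter.atTop (nhds 0) := by
    have hp := hA.tendsto_sum_nat
    have : Filter.Tendsto (fun n => S - ∑ k ∈ Finset.range n, a k) Filter.atTop (nhds (S - S)) :=
      Filter.Tendsto.sub tendsto_const_nhds hp
    rw [sub_self] at this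
    exact this.congr fun n => (htS n).symm
  -- key inequality : a n ≤ t (n+1)
  have hkey : ∀ n, a n ≤ t (n + 1) := by
    intro n
    have hS1 : HasSum (fun k => a (k + 1)) (S - 1) := by
      rw [hasSum_nat_add_iff 1]
      simpa [ha_def, fib1] using hA
    have hbound : ∀ k, a n * a (k + 1) ≤ a (k + (n + 1)) := by
      intro k
      have hfib : (fib1 n : ℝ) * fib1 (k + 1) ≤ fib1 (k + (n + 1)) := by
        have := fib1_mul_le n (k + 1)
        have he : n + (k + 1) = k + (n + 1) := by ring
        rw [he] at this
        exact_mod_cast this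
      simp only [ha_def]
      rw [div_mul_div_comm, div_le_div_iff₀ (by positivity) (by positivity)]
      calc (fib1 n : ℝ) * fib1 (k+1) * q ^ (k + (n+1))
          ≤ (fib1 (k + (n+1)) : ℝ) * q ^ (k + (n+1)) := by
            apply mul_le_mul_of_nonneg_right hfib (by positivity)
        _ = (fib1 (k + (n+1)) : ℝ) * (q ^ n * q ^ (k+1)) := by rw [← pow_add]; ring_nf
    have hsum_rhs : Summable fun k => a n * a (k + 1) := (hS1.summable).mul_left _
    have h1 : a n * (S - 1) ≤ t n.succ := by
      rw [ht_def]
      have : HasSum (fun k => a n * a (k + 1)) (a n * (S - 1)) := hS1.mul_left _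
      rw [← this.tsum_eq]
      exact Summable.tsum_le_tsum hbound hsum_rhs (hsum_t (n + 1))
    have : a n ≤ a n * (S - 1) := by
      nlinarith [ha_pos n, hS2]
    linarith
  -- greedy algorithm
  set r : ℕ → ℝ := fun n => Nat.rec L (fun m rm => if a m ≤ rm then rm - a m else rm) n
    with hr_def
  have hr_succ : ∀ n, r (n + 1) = if a n ≤ r n then r n - a n else r n := fun n => rfl
  set u : ℕ → ℝ := fun n => if a n ≤ r n then 1 else 0 with hu_def
  have hu01 : ∀ n, u n = 0 ∨ u n = 1 := by
    intro n; simp only [hu_def]; split <;> simp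
  have hinv : ∀ n, 0 ≤ r n ∧ r n ≤ t n := by
    intro n
    induction n with
    | zero => exact ⟨hL0, by rw [ht0]; exact hL1⟩
    | succ m ih =>
      rw [hr_succ]
      by_cases h : a m ≤ r m
      · rw [if_pos h]
        constructor
        · linarith
        · have := ht_succ m
          linarith [ih.2]
      · rw [if_neg h]
        exact ⟨ih.1, le_trans (le_of_not_ge h) (hkey m)⟩
  have hpartial : ∀ n, ∑ k ∈ Finset.range n, u k * a k = L - r n := by
    intro n
    induction n with
    | zero => simp [hr_def]
    | succ m ih =>
      rw [Finset.sum_range_succ, ih, hr_succ]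
      simp only [hu_def]
      by_cases h : a m ≤ r m
      · rw [if_pos h, if_pos h]; ring
      · rw [if_neg h, if_neg h]; ring
  have hr_tendsto : Filter.Tendsto r Filter.atTop (nhds 0) :=
    squeeze_zero (fun n => (hinv n).1) (fun n => (hinv n).2) ht_tendsto
  have hP_tendsto :
      Filter.Tendsto (fun n => ∑ k ∈ Finset.range n, u k * a k) Filter.atTop (nhds L) := by
    have : Filter.Tendsto (fun n => L - r n) Filter.atTop (nhds (L - 0)) :=
      Filter.Tendsto.sub tendsto_const_nhds hr_tendsto
    rw [sub_zero] at this
    exact this.congr fun n => (hpartial n).symm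
  have hsum_ua : Summable fun n => u n * a n := by
    apply Summable.of_nonneg_of_le _ _ hsum_a
    · intro n
      rcases hu01 n with h | h <;> simp [h, (ha_pos n).le]
    · intro n
      rcases hu01 n with h | h <;> simp [h, (ha_pos n).le]
  have hfinal : HasSum (fun n => u n * a n) L := by
    have h := hsum_ua.hasSum
    have := h.tendsto_sum_nat
    have heq : (∑' n, u n * a n) = L := tendsto_nhds_unique this hP_tendsto
    rwa [heq] at h
  refine ⟨u, hu01, ?_⟩
  have : (fun n => u n * (fib1 n : ℝ) / q ^ n) = fun n => u n * a n := by
    funext n; rw [ha_def, mul_div_assoc]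
  rwa [this]
end

section
/- Let q be a real number with q > 1 + √3. Then the open interval ( (q+1)/(q² - q - 1), 1 ) is nonempty, and no x in this interval can be written as x = ∑_{k=0}^∞ u_k f_k / q^k with u : ℕ → {0,1}. Consequently the set R_∞(q) := { ∑_{k=0}^∞ u_k f_k/q^k : u ∈ {0,1}^ℕ } is a proper subset of the interval [0, q²/(q² - q - 1)]. -/
lemma fib1_le_two_pow : ∀ n, fib1 n ≤ 2 ^ n := by
  intro n
  induction n using Nat.strong_induction_on with
  | _ n ih =>
    match n with
    | 0 => simp [fib1]
    | 1 => simp [fib1]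
    | n + 2 =>
      have h1 := ih (n + 1) (by omega)
      have h2 := ih n (by omega)
      have h3 : (2:ℕ) ^ n ≤ 2 ^ (n+1) := Nat.pow_le_pow_right (by norm_num) (by omega)
      have h4 : (2:ℕ) ^ (n+2) = 2^(n+1) + 2^(n+1) := by ring
      show fib1 (n+1) + fib1 n ≤ 2 ^ (n+2)
      omega

theorem stmt2 (q : ℝ) (hq : 1 + Real.sqrt 3 < q) :
    (q + 1) / (q ^ 2 - q - 1) < 1 ∧
    (∀ x ∈ Set.Ioo ((q + 1) / (q ^ 2 - q - 1)) 1,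
      ¬ ∃ u : ℕ → ℝ, (∀ n, u n = 0 ∨ u n = 1) ∧
        HasSum (fun k => u k * (fib1 k : ℝ) / q ^ k) x) ∧
    {y : ℝ | ∃ u : ℕ → ℝ, (∀ n, u n = 0 ∨ u n = 1) ∧
        HasSum (fun k => u k * (fib1 k : ℝ) / q ^ k) y} ⊂
      Set.Icc 0 (q ^ 2 / (q ^ 2 - q - 1)) := by
  have hs3 : Real.sqrt 3 ^ 2 = 3 := Real.sq_sqrt (by norm_num)
  have hs3n : (0:ℝ) ≤ Real.sqrt 3 := Real.sqrt_nonneg 3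
  have h31 : (1:ℝ) < Real.sqrt 3 := by nlinarith
  have hq2 : (2:ℝ) < q := by linarith
  have hq0 : (0:ℝ) < q := by linarith
  have hqne : q ≠ 0 := ne_of_gt hq0
  have hkey : q + 1 < q ^ 2 - q - 1 := by nlinarith
  have hD : 0 < q ^ 2 - q - 1 := by nlinarith
  set g : ℕ → ℝ := fun k => (fib1 k : ℝ) / q ^ k with hg_def
  have hgnn : ∀ k, 0 ≤ g k := fun k => by positivity
  have hgle : ∀ k, g k ≤ (2 / q) ^ k := by
    intro k
    rw [div_pow]
    have h : (fib1 k : ℝ) ≤ 2 ^ k := by exact_mod_cast fib1_le_two_pow k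
    show (fib1 k : ℝ) / q ^ k ≤ 2 ^ k / q ^ k
    gcongr
  have hsum_g : Summable g :=
    Summable.of_nonneg_of_le hgnn hgle
      (summable_geometric_of_lt_one (by positivity) (by rw [div_lt_one hq0]; linarith))
  have hsum_g1 : Summable (fun k => g (k + 1)) := (summable_nat_add_iff 1).2 hsum_g
  have hsum_g2 : Summable (fun k => g (k + 2)) := (summable_nat_add_iff 2).2 hsum_g
  set A := ∑' k, g k with hA_def
  have hg0 : g 0 = 1 := by simp [hg_def, fib1]
  have hg1 : g 1 = 1 / q := by simp [hg_def, fib1]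
  have hA1 : A = 1 + ∑' k, g (k + 1) := by rw [hA_def, Summable.tsum_eq_zero_add hsum_g, hg0]
  have hA2 : ∑' k, g (k + 1) = 1 / q + ∑' k, g (k + 2) := by
    rw [Summable.tsum_eq_zero_add hsum_g1, hg1]
  have hrec : ∀ k, g (k + 2) = (1 / q) * g (k + 1) + (1 / q ^ 2) * g k := by
    intro k
    have hf : (fib1 (k + 2) : ℝ) = (fib1 (k + 1) : ℝ) + (fib1 k : ℝ) := by
      norm_cast
    simp only [hg_def]
    rw [hf]
    field_simp
    ring
  have hC : ∑' k, g (k + 2) = (1 / q) * (∑' k, g (k + 1)) + (1 / q ^ 2) * A := by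
    rw [hA_def, ← tsum_mul_left, ← tsum_mul_left,
      ← Summable.tsum_add (hsum_g1.mul_left _) (hsum_g.mul_left _)]
    exact tsum_congr hrec
  have hB : ∑' k, g (k + 1) = A - 1 := by linarith
  have hAval : A = q ^ 2 / (q ^ 2 - q - 1) := by
    rw [eq_div_iff hD.ne']
    rw [hB] at hC
    have h : A - 1 = 1 / q + (1 / q * (A - 1) + 1 / q ^ 2 * A) := by
      linarith [hA2, hB, hC]
    field_simp at h
    nlinarith [h]
  have hBval : ∑' k, g (k + 1) = (q + 1) / (q ^ 2 - q - 1) := by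
    rw [hB, hAval]
    rw [div_sub_one hD.ne']
    ring
  have hL1 : (q + 1) / (q ^ 2 - q - 1) < 1 := (div_lt_one hD).2 hkey
  have hLnn : 0 ≤ (q + 1) / (q ^ 2 - q - 1) := by positivity
  have hA1' : 1 < A := by
    rw [hAval]
    rw [lt_div_iff₀ hD]
    nlinarith
  -- main nonrepresentability
  have main : ∀ x ∈ Set.Ioo ((q + 1) / (q ^ 2 - q - 1)) 1,
      ¬ ∃ u : ℕ → ℝ, (∀ n, u n = 0 ∨ u n = 1) ∧
        HasSum (fun k => u k * (fib1 k : ℝ) / q ^ k) x := by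
    rintro x hx ⟨u, hu, hsum⟩
    set fu : ℕ → ℝ := fun k => u k * (fib1 k : ℝ) / q ^ k with hfu_def
    have hfu_nn : ∀ k, 0 ≤ fu k := by
      intro k
      rcases hu k with h | h <;> simp [hfu_def, h] <;> positivity
    have hfu_le : ∀ k, fu k ≤ g k := by
      intro k
      rcases hu k with h | h <;> simp [hfu_def, hg_def, h]
      exact hgnn k
    have hxs : Summable fu := hsum.summable
    have hxs1 : Summable (fun k => fu (k + 1)) := (summable_nat_add_iff 1).2 hxs
    have hx_eq : x = fu 0 + ∑' k, fu (k + 1) := by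
      rw [← hsum.tsum_eq]
      exact Summable.tsum_eq_zero_add hxs
    rcases hu 0 with h0 | h0
    · have hfu0 : fu 0 = 0 := by simp [hfu_def, h0]
      have hle : ∑' k, fu (k + 1) ≤ ∑' k, g (k + 1) :=
        Summable.tsum_le_tsum (fun k => hfu_le (k + 1)) hxs1 hsum_g1
      rw [hBval] at hle
      have := hx.1
      rw [hx_eq, hfu0] at this
      linarith
    · have hfu0 : fu 0 = 1 := by simp [hfu_def, fib1, h0]
      have htail : 0 ≤ ∑' k, fu (k + 1) := tsum_nonneg (fun k => hfu_nn (k + 1))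
      have := hx.2
      rw [hx_eq, hfu0] at this
      linarith
  refine ⟨hL1, main, ?_⟩
  have hsub : {y : ℝ | ∃ u : ℕ → ℝ, (∀ n, u n = 0 ∨ u n = 1) ∧
      HasSum (fun k => u k * (fib1 k : ℝ) / q ^ k) y} ⊆
      Set.Icc 0 (q ^ 2 / (q ^ 2 - q - 1)) := by
    rintro y ⟨u, hu, hsum⟩
    set fu : ℕ → ℝ := fun k => u k * (fib1 k : ℝ) / q ^ k with hfu_def
    have hfu_nn : ∀ k, 0 ≤ fu k := by
      intro k
      rcases hu k with h | h <;> simp [hfu_def, h] <;> positivity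
    have hfu_le : ∀ k, fu k ≤ g k := by
      intro k
      rcases hu k with h | h <;> simp [hfu_def, hg_def, h]
      exact hgnn k
    have h1 : 0 ≤ y := hsum.nonneg hfu_nn
    have h2 : y ≤ A := by
      rw [← hsum.tsum_eq, hA_def]
      exact Summable.tsum_le_tsum hfu_le hsum.summable hsum_g
    exact ⟨h1, by rw [← hAval]; exact h2⟩
  rw [Set.ssubset_iff_of_subset hsub]
  refine ⟨((q + 1) / (q ^ 2 - q - 1) + 1) / 2, ⟨by linarith, by rw [← hAval]; linarith⟩, ?_⟩
  intro hm
  exact main _ ⟨by linarith, by linarith⟩ hm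
end

section
/- Let z be a nonzero complex number and u : ℕ → {0,1}. Define the sequence (x̄_n) in ℂ by x̄_0 = u_0, x̄_1 = u_1 + u_0/z, and x̄_{n+2} = u_{n+2} + x̄_{n+1}/z + x̄_n/z² for all n ≥ 0. Then for every n ≥ 0, x̄_n = ∑_{k=0}^n (f_k / z^k) u_{n-k}. -/
theorem stmt4 (z : ℂ) (hz : z ≠ 0) (u : ℕ → ℂ) (hu : ∀ n, u n = 0 ∨ u n = 1)
    (x : ℕ → ℂ) (h0 : x 0 = u 0) (h1 : x 1 = u 1 + u 0 / z)
    (hrec : ∀ n : ℕ, x (n + 2) = u (n + 2) + x (n + 1) / z + x n / z ^ 2) :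
    ∀ n : ℕ, x n = ∑ k ∈ Finset.range (n + 1), (fib1 k : ℂ) / z ^ k * u (n - k) := by
  intro n
  induction n using Nat.twoStepInduction with
  | zero => simpa [fib1] using h0
  | one =>
    rw [h1]
    simp [Finset.sum_range_succ, fib1]
    ring
  | more n ih1 ih2 =>
    rw [hrec, ih1, ih2]
    rw [Finset.sum_range_succ' (fun k => (fib1 k : ℂ)/z^k * u (n+2-k)) (n+2)]
    rw [Finset.sum_range_succ' (fun k => (fib1 (k+1):ℂ)/z^(k+1) * u (n+2-(k+1))) (n+1)]
    rw [Finset.sum_range_succ' (fun k => (fib1 k : ℂ)/z^k * u (n+1-k)) (n+1)]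
    have key : ∀ k ∈ Finset.range (n+1),
        ((fib1 (k+1+1):ℂ)/z^(k+1+1) * u (n+2-(k+1+1)))
        = (fib1 (k+1):ℂ)/z^(k+1) * u (n+1-(k+1)) / z + (fib1 k:ℂ)/z^k * u (n-k) / z^2 := by
      intro k _
      have : n + 2 - (k+1+1) = n - k := by omega
      rw [this]
      have : n + 1 - (k+1) = n - k := by omega
      rw [this]
      show ((fib1 (k+2):ℂ)) / z^(k+2) * u (n-k) = _
      rw [show fib1 (k+2) = fib1 (k+1) + fib1 k from rfl]
      push_cast
      field_simp
      ring
    rw [Finset.sum_congr rfl key, Finset.sum_add_distrib, ← Finset.sum_div, ← Finset.sum_div]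
    simp only [fib1, Nat.succ_sub_succ, Nat.add_sub_cancel]
    push_cast
    field_simp
    ring
end

section
/- Let p ≥ 2 be a natural number and define Δ_p(q) := (q^p - f_{p-2})(q^p - f_p) - f_{p-1}² for real q. Then for all real q, Δ_p(q) = q^{2p} - (f_{p-2} + f_p) q^p + (-1)^p. Moreover the set of real roots of Δ_p is exactly {φ, -φ, φ-1, 1-φ} if p is even, and exactly {φ, 1-φ} if p is odd. In particular Δ_p(q) ≠ 0 for every real q > φ. -/
lemma sqrt5_sq : Real.sqrt 5 ^ 2 = 5 := Real.sq_sqrt (by norm_num)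

lemma sqrt5_gt : (2:ℝ) < Real.sqrt 5 := by
  nlinarith [sqrt5_sq, Real.sqrt_nonneg 5]

lemma phi_gt_one : (1:ℝ) < phi := by
  unfold phi; nlinarith [sqrt5_gt]

lemma phi_mul_psi : phi * (1 - phi) = -1 := by
  unfold phi; nlinarith [sqrt5_sq]

/-- Cassini-type identity over ℤ. -/
lemma cassini : ∀ n : ℕ, (fib1 n : ℤ) * fib1 (n + 2) - (fib1 (n + 1) : ℤ) ^ 2 = (-1) ^ n := by
  intro n
  induction n with
  | zero => simp [fib1]
  | succ k ih =>
    have h3 : fib1 (k + 3) = fib1 (k + 2) + fib1 (k + 1) := rfl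
    have h2 : fib1 (k + 2) = fib1 (k + 1) + fib1 k := rfl
    rw [show k + 1 + 2 = k + 3 from rfl, h3]
    push_cast [h2] at ih ⊢
    ring_nf
    ring_nf at ih
    linarith [ih]

/-- Lucas-type identity. -/
lemma lucas : ∀ n : ℕ, (fib1 n : ℝ) + fib1 (n + 2) = phi ^ (n + 2) + (1 - phi) ^ (n + 2) := by
  have base : ∀ n : ℕ,
      ((fib1 n : ℝ) + fib1 (n + 2) = phi ^ (n + 2) + (1 - phi) ^ (n + 2)) ∧
      ((fib1 (n+1) : ℝ) + fib1 (n + 3) = phi ^ (n + 3) + (1 - phi) ^ (n + 3)) := by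
    intro n
    induction n with
    | zero =>
      constructor
      · show ((1:ℕ):ℝ) + ((2:ℕ):ℝ) = _
        push_cast
        nlinarith [sqrt5_sq, phi_mul_psi]
      · show ((1:ℕ):ℝ) + ((3:ℕ):ℝ) = _
        push_cast
        nlinarith [sqrt5_sq, phi_mul_psi]
    | succ k ih =>
      obtain ⟨ih1, ih2⟩ := ih
      refine ⟨ih2, ?_⟩
      have h4 : fib1 (k + 4) = fib1 (k + 3) + fib1 (k + 2) := rfl
      have h2 : fib1 (k + 2) = fib1 (k + 1) + fib1 k := rfl
      have hphi : phi ^ (k + 4) = phi ^ (k + 3) + phi ^ (k + 2) := by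
        have : phi ^ 2 = phi + 1 := by unfold phi; nlinarith [sqrt5_sq]
        calc phi ^ (k + 4) = phi ^ (k + 2) * phi ^ 2 := by ring
          _ = phi ^ (k + 2) * (phi + 1) := by rw [this]
          _ = phi ^ (k + 3) + phi ^ (k + 2) := by ring
      have hpsi : (1 - phi) ^ (k + 4) = (1 - phi) ^ (k + 3) + (1 - phi) ^ (k + 2) := by
        have : (1 - phi) ^ 2 = (1 - phi) + 1 := by unfold phi; nlinarith [sqrt5_sq]
        calc (1 - phi) ^ (k + 4) = (1 - phi) ^ (k + 2) * (1 - phi) ^ 2 := by ring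
          _ = (1 - phi) ^ (k + 2) * ((1 - phi) + 1) := by rw [this]
          _ = (1 - phi) ^ (k + 3) + (1 - phi) ^ (k + 2) := by ring
      show (fib1 (k + 2) : ℝ) + fib1 (k + 4) = _
      rw [show k + 1 + 3 = k + 4 from rfl, hphi, hpsi]
      have h2' : (fib1 (k + 2) : ℝ) = fib1 (k + 1) + fib1 k := by exact_mod_cast h2
      push_cast [h4, h2]
      linarith [ih1, ih2, h2']
  exact fun n => (base n).1

lemma even_pow_eq {n : ℕ} (hn : Even n) (h0 : n ≠ 0) (q c : ℝ) (hc : 0 ≤ c) :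
    q ^ n = c ^ n ↔ q = c ∨ q = -c := by
  constructor
  · intro h
    have h1 : |q| ^ n = c ^ n := by rw [hn.pow_abs, h]
    have h2 : |q| = c := (pow_left_inj₀ (abs_nonneg q) hc h0).mp h1
    exact abs_eq hc |>.mp h2
  · rintro (rfl | rfl)
    · rfl
    · exact hn.neg_pow c

theorem stmt15 (p : ℕ) (hp : 2 ≤ p) :
    (∀ q : ℝ,
      (q ^ p - (fib1 (p - 2) : ℝ)) * (q ^ p - (fib1 p : ℝ)) - (fib1 (p - 1) : ℝ) ^ 2 =
        q ^ (2 * p) - ((fib1 (p - 2) : ℝ) + (fib1 p : ℝ)) * q ^ p + (-1 : ℝ) ^ p) ∧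
    ({q : ℝ |
        (q ^ p - (fib1 (p - 2) : ℝ)) * (q ^ p - (fib1 p : ℝ)) - (fib1 (p - 1) : ℝ) ^ 2 = 0} =
      if Even p then {phi, -phi, phi - 1, 1 - phi} else {phi, 1 - phi}) ∧
    ∀ q : ℝ, phi < q →
      (q ^ p - (fib1 (p - 2) : ℝ)) * (q ^ p - (fib1 p : ℝ)) - (fib1 (p - 1) : ℝ) ^ 2 ≠ 0 := by
  obtain ⟨m, rfl⟩ : ∃ m, p = m + 2 := ⟨p - 2, (Nat.sub_add_cancel hp).symm⟩
  have e2 : m + 2 - 2 = m := by omega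
  have e1 : m + 2 - 1 = m + 1 := by omega
  rw [e2, e1]
  have hcas : (fib1 m : ℝ) * fib1 (m + 2) - (fib1 (m + 1) : ℝ) ^ 2 = (-1) ^ (m + 2) := by
    have h := congrArg (fun z : ℤ => (z : ℝ)) (cassini m)
    push_cast at h
    have e : ((-1:ℝ)) ^ (m + 2) = (-1) ^ m := by rw [pow_add]; norm_num
    rw [e]; exact h
  have part1 : ∀ q : ℝ,
      (q ^ (m+2) - (fib1 m : ℝ)) * (q ^ (m+2) - (fib1 (m+2) : ℝ)) - (fib1 (m+1) : ℝ) ^ 2 =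
        q ^ (2 * (m+2)) - ((fib1 m : ℝ) + (fib1 (m+2) : ℝ)) * q ^ (m+2) + (-1 : ℝ) ^ (m+2) := by
    intro q
    rw [mul_comm 2 (m + 2), pow_mul]
    linear_combination hcas
  have hprod : phi ^ (m+2) * (1 - phi) ^ (m+2) = (-1 : ℝ) ^ (m+2) := by
    rw [← mul_pow, phi_mul_psi]
  have hfac : ∀ q : ℝ,
      (q ^ (m+2) - (fib1 m : ℝ)) * (q ^ (m+2) - (fib1 (m+2) : ℝ)) - (fib1 (m+1) : ℝ) ^ 2 =
        (q ^ (m+2) - phi ^ (m+2)) * (q ^ (m+2) - (1 - phi) ^ (m+2)) := by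
    intro q
    rw [part1 q, mul_comm 2 (m + 2), pow_mul, ← hprod]
    have hL := lucas m
    linear_combination (-(q ^ (m+2))) * hL
  have hphi_pos : (0:ℝ) < phi := lt_trans one_pos phi_gt_one
  have hpsi : (1:ℝ) - phi = -(phi - 1) := by ring
  have part2 : {q : ℝ |
        (q ^ (m+2) - (fib1 m : ℝ)) * (q ^ (m+2) - (fib1 (m+2) : ℝ)) - (fib1 (m+1) : ℝ) ^ 2 = 0} =
      if Even (m+2) then ({phi, -phi, phi - 1, 1 - phi} : Set ℝ) else {phi, 1 - phi} := by
    ext q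
    rw [Set.mem_setOf_eq, hfac q, mul_eq_zero, sub_eq_zero, sub_eq_zero]
    by_cases he : Even (m + 2)
    · rw [if_pos he]
      have h1 := even_pow_eq he (by omega) q phi hphi_pos.le
      have h2 : q ^ (m+2) = (1 - phi) ^ (m+2) ↔ q = phi - 1 ∨ q = -(phi - 1) := by
        rw [hpsi, he.neg_pow]
        exact even_pow_eq he (by omega) q (phi - 1) (by linarith [phi_gt_one])
      rw [h1, h2]
      simp only [Set.mem_insert_iff, Set.mem_singleton_iff]
      rw [show (1:ℝ) - phi = -(phi - 1) by ring]
      tauto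
    · rw [if_neg he]
      have ho : Odd (m + 2) := Nat.not_even_iff_odd.mp he
      have inj := (ho.strictMono_pow (R := ℝ)).injective
      simp only [Set.mem_insert_iff, Set.mem_singleton_iff]
      constructor
      · rintro (h | h)
        · exact Or.inl (inj h)
        · exact Or.inr (inj h)
      · rintro (rfl | rfl)
        · exact Or.inl rfl
        · exact Or.inr rfl
  refine ⟨part1, part2, ?_⟩
  intro q hq h
  have hmem : q ∈ (if Even (m+2) then ({phi, -phi, phi - 1, 1 - phi} : Set ℝ) else {phi, 1 - phi}) := by
    rw [← part2]; exact h
  split_ifs at hmem with he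
  · simp only [Set.mem_insert_iff, Set.mem_singleton_iff] at hmem
    rcases hmem with rfl | rfl | rfl | rfl <;> linarith [phi_gt_one, hphi_pos]
  · simp only [Set.mem_insert_iff, Set.mem_singleton_iff] at hmem
    rcases hmem with rfl | rfl <;> linarith [phi_gt_one, hphi_pos]
end

section
/- Let p ≥ 2 be a natural number and set q(p) := ( (f_{p-2} + 2 f_p)/2 + (1/2)·√( (f_{p-2} + 2 f_p)² - 8 ) )^{1/p} if p is even, and q(p) := ( (f_{p-2} + 2 f_p)/2 + (1/2)·√( (f_{p-2} + 2 f_p)² + 8 ) )^{1/p} if p is odd. Then q(p) > φ, the series ∑_{k=0}^∞ f_{pk}/q(p)^{pk} converges and equals 2, and q(p) is the unique real number q > φ with ∑_{k=0}^∞ f_{pk}/q^{pk} = 2. -/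
lemma fib1_eq_fib (n : ℕ) : fib1 n = Nat.fib (n + 1) := by
  induction n using Nat.twoStepInduction with
  | zero => rfl
  | one => rfl
  | more n ih1 ih2 => simp [fib1, ih1, ih2, Nat.fib_add_two]; ring

lemma coe_fib1 (n : ℕ) :
    (fib1 n : ℝ) = (Real.goldenRatio ^ (n+1) - Real.goldenConj ^ (n+1)) / Real.sqrt 5 := by
  rw [fib1_eq_fib]; exact_mod_cast Real.coe_fib_eq (n+1)

lemma Tval (a b s A B Fr c y : ℝ) (hs : a - b = s) (hF : s * Fr = a * B - b * A)
    (hc : c = 2 * (A + B) - Fr) (hq : y ^ 2 - c * y + 2 * (A * B) = 0)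
    (hA : y - A ≠ 0) (hB : y - B ≠ 0) (hy : y ≠ 0) (hsne : s ≠ 0) :
    a / s * (1 - A / y)⁻¹ - b / s * (1 - B / y)⁻¹ = 2 := by
  have key : a * y * (y - B) - b * y * (y - A) = 2 * (s * ((y - A) * (y - B))) := by
    linear_combination y^2 * hs + y * hF - s * y * hc - s * hq
  calc a / s * (1 - A / y)⁻¹ - b / s * (1 - B / y)⁻¹
      = (a * y * (y - B) - b * y * (y - A)) / (s * ((y - A) * (y - B))) := by
        rw [show (1 - A / y) = (y - A) / y by field_simp,
            show (1 - B / y) = (y - B) / y by field_simp]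
        field_simp
    _ = 2 * (s * ((y - A) * (y - B))) / (s * ((y - A) * (y - B))) := by rw [key]
    _ = 2 := by
        rw [mul_div_assoc, div_self (mul_ne_zero hsne (mul_ne_zero hA hB)), mul_one]

lemma Tval_inv (a b s A B Fr c y : ℝ) (hs : a - b = s) (hF : s * Fr = a * B - b * A)
    (hc : c = 2 * (A + B) - Fr)
    (h2 : a / s * (1 - A / y)⁻¹ - b / s * (1 - B / y)⁻¹ = 2)
    (hA : y - A ≠ 0) (hB : y - B ≠ 0) (hy : y ≠ 0) (hsne : s ≠ 0) :
    y ^ 2 - c * y + 2 * (A * B) = 0 := by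
  have e : a / s * (1 - A / y)⁻¹ - b / s * (1 - B / y)⁻¹
      = (a * y * (y - B) - b * y * (y - A)) / (s * ((y - A) * (y - B))) := by
    rw [show (1 - A / y) = (y - A) / y by field_simp,
        show (1 - B / y) = (y - B) / y by field_simp]
    field_simp
  rw [e, div_eq_iff (mul_ne_zero hsne (mul_ne_zero hA hB))] at h2
  have h3 : Real.sqrt 5 * 0 = 0 := by ring
  have h4 : s * (y ^ 2 - c * y + 2 * (A * B)) = 0 := by
    linear_combination y^2 * hs + y * hF - s * y * hc - h2
  exact (mul_eq_zero.mp h4).resolve_left hsne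

lemma sum_aux (p : ℕ) (hp : 2 ≤ p) (y : ℝ) (hy : Real.goldenRatio ^ p < y) :
    HasSum (fun k => (fib1 (p * k) : ℝ) / y ^ k)
      ((Real.goldenRatio / Real.sqrt 5) * (1 - Real.goldenRatio ^ p / y)⁻¹
        - (Real.goldenConj / Real.sqrt 5) * (1 - Real.goldenConj ^ p / y)⁻¹) := by
  have hα := Real.one_lt_goldenRatio
  have hA : 1 < Real.goldenRatio ^ p := by
    nlinarith [pow_le_pow_right₀ (le_of_lt hα) (show 1 ≤ p by omega), hα]
  have hy0 : 0 < y := lt_trans (by linarith) hy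
  have hβ : |Real.goldenConj| < 1 := abs_lt.2 ⟨Real.neg_one_lt_goldenConj, by linarith [Real.goldenConj_neg]⟩
  have hB : |Real.goldenConj ^ p| < 1 := by
    rw [abs_pow]; exact pow_lt_one₀ (abs_nonneg _) hβ (by omega)
  have h1 : HasSum (fun k : ℕ => (Real.goldenRatio ^ p / y) ^ k) (1 - Real.goldenRatio ^ p / y)⁻¹ := by
    apply hasSum_geometric_of_norm_lt_one
    rw [Real.norm_eq_abs, abs_div, abs_of_pos hy0, abs_of_pos (by positivity)]
    rw [div_lt_one hy0]; exact hy
  have h2 : HasSum (fun k : ℕ => (Real.goldenConj ^ p / y) ^ k) (1 - Real.goldenConj ^ p / y)⁻¹ := by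
    apply hasSum_geometric_of_norm_lt_one
    rw [Real.norm_eq_abs, abs_div, abs_of_pos hy0, div_lt_one hy0]
    exact lt_trans hB (lt_trans hA hy)
  have := (h1.mul_left (Real.goldenRatio / Real.sqrt 5)).sub
    (h2.mul_left (Real.goldenConj / Real.sqrt 5))
  convert this using 2 with k
  · rfl
  have e1 : Real.goldenRatio ^ (p*k+1) = Real.goldenRatio * (Real.goldenRatio^p)^k := by
    rw [pow_succ', pow_mul]
  have e2 : Real.goldenConj ^ (p*k+1) = Real.goldenConj * (Real.goldenConj^p)^k := by
    rw [pow_succ', pow_mul]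
  have h5 : Real.sqrt 5 ≠ 0 := by positivity
  rw [coe_fib1, e1, e2, div_pow, div_pow]
  ring

lemma core (p : ℕ) (hp : 2 ≤ p) (c : ℝ)
    (hcdef : c = (fib1 (p - 2) : ℝ) + 2 * (fib1 p : ℝ)) :
    ∃ D y₀ : ℝ,
      D = c ^ 2 - 8 * (-1:ℝ) ^ p ∧ 0 < D ∧ y₀ = (c + Real.sqrt D) / 2 ∧
      Real.goldenRatio ^ p < y₀ ∧
      HasSum (fun k => (fib1 (p * k) : ℝ) / y₀ ^ k) 2 ∧
      ∀ z : ℝ, Real.goldenRatio ^ p < z →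
        HasSum (fun k => (fib1 (p * k) : ℝ) / z ^ k) 2 → z = y₀ := by
  have hα : (1:ℝ) < Real.goldenRatio := Real.one_lt_goldenRatio
  have hα2 : Real.goldenRatio < 2 := Real.goldenRatio_lt_two
  have hβn : Real.goldenConj < 0 := Real.goldenConj_neg
  have hβ1 : -1 < Real.goldenConj := Real.neg_one_lt_goldenConj
  have hs_pos : (0:ℝ) < Real.sqrt 5 := by positivity
  have hs2 : Real.sqrt 5 ^ 2 = 5 := Real.sq_sqrt (by norm_num)
  have hs_gt : (2:ℝ) < Real.sqrt 5 := by nlinarith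
  have hαβ : Real.goldenRatio * Real.goldenConj = -1 := Real.goldenRatio_mul_goldenConj
  have hsub : Real.goldenRatio - Real.goldenConj = Real.sqrt 5 := Real.goldenRatio_sub_goldenConj
  set A : ℝ := Real.goldenRatio ^ p with hAdef
  set B : ℝ := Real.goldenConj ^ p with hBdef
  have hA2 : Real.goldenRatio ^ 2 ≤ A := pow_le_pow_right₀ hα.le hp
  have hBabs : |B| < 1 := by
    rw [hBdef, abs_pow]
    exact pow_lt_one₀ (abs_nonneg _) (abs_lt.2 ⟨hβ1, by linarith⟩) (by omega)
  have hAB : A * B = (-1:ℝ)^p := by rw [hAdef, hBdef, ← mul_pow, hαβ]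
  have hpm : p - 2 + 1 = p - 1 := by omega
  have hpm2 : p - 1 + 1 = p := by omega
  have hap : Real.goldenRatio ^ (p-1) = -Real.goldenConj * A := by
    apply mul_right_cancel₀ Real.goldenRatio_ne_zero
    rw [← pow_succ, hpm2, hAdef]
    linear_combination (Real.goldenRatio ^ p) * hαβ
  have hbp : Real.goldenConj ^ (p-1) = -Real.goldenRatio * B := by
    apply mul_right_cancel₀ Real.goldenConj_ne_zero
    rw [← pow_succ, hpm2, hBdef]
    linear_combination (Real.goldenConj ^ p) * hαβ
  set Fr : ℝ := (fib1 (p - 2) : ℝ) with hFrdef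
  clear_value Fr
  have hFr : Real.sqrt 5 * Fr = Real.goldenRatio * B - Real.goldenConj * A := by
    have h1 : Fr = (Real.goldenRatio ^ (p-1) - Real.goldenConj ^ (p-1)) / Real.sqrt 5 := by
      rw [hFrdef, coe_fib1, hpm]
    rw [h1, hap, hbp]
    field_simp
    ring
  have hfp : Real.sqrt 5 * ((fib1 p : ℝ)) = Real.goldenRatio * A - Real.goldenConj * B := by
    rw [coe_fib1, pow_succ, hAdef, hBdef, pow_succ]
    field_simp
  clear_value A B
  have hA1 : 1 < A := by linarith [Real.goldenRatio_sq, hA2, Real.one_lt_goldenRatio]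
  have hA0 : (0:ℝ) < A := lt_trans zero_lt_one hA1
  have hB1 : B < 1 := (abs_lt.1 hBabs).2
  have hBm : -1 < B := (abs_lt.1 hBabs).1
  have hcval : c = 2 * (A + B) - Fr := by
    apply mul_left_cancel₀ (ne_of_gt hs_pos)
    rw [hcdef]
    linear_combination 2 * hFr + 2 * hfp
  have hFrA : Fr < A := by
    have t1 : Real.goldenRatio * B < Real.goldenRatio := by
      have := mul_lt_mul_of_pos_left hB1 Real.goldenRatio_pos
      simpa using this
    have t2 : -Real.goldenConj * A < A := by
      have := mul_lt_mul_of_pos_right (show -Real.goldenConj < 1 by linarith) hA0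
      simpa using this
    have h1 : Real.sqrt 5 * Fr < Real.goldenRatio + A := by linarith [hFr]
    have hA3 : Real.goldenRatio + 1 ≤ A := by linarith [Real.goldenRatio_sq, hA2]
    by_contra hcon
    push_neg at hcon
    have h2 : Real.sqrt 5 * A ≤ Real.sqrt 5 * Fr :=
      mul_le_mul_of_nonneg_left hcon hs_pos.le
    have hQ : 0 < (Real.sqrt 5 - 2) * (Real.goldenRatio + 1) :=
      mul_pos (by linarith) (by linarith [Real.goldenRatio_pos])
    have hP : 0 ≤ (Real.sqrt 5 - 2) * (A - Real.goldenRatio - 1) :=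
      mul_nonneg (by linarith) (by linarith)
    linarith [hQ, hP, h1, h2, hA3]
  have hquadA : A^2 - c*A + 2*(A*B) < 0 := by
    have h : A^2 - c*A + 2*(A*B) = A * (Fr - A) := by rw [hcval]; ring
    rw [h]
    exact mul_neg_of_pos_of_neg hA0 (by linarith)
  set D : ℝ := c^2 - 8*(A*B) with hDdef
  have hD : 0 < D := by
    have e : c^2 - 8*(A*B) = (2*A - c)^2 - 4*(A^2 - c*A + 2*(A*B)) := by ring
    rw [hDdef, e]
    linarith [sq_nonneg (2*A - c), hquadA]
  have hsqD : Real.sqrt D ^ 2 = D := Real.sq_sqrt hD.le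
  have hsqD0 : 0 ≤ Real.sqrt D := Real.sqrt_nonneg D
  set y₀ : ℝ := (c + Real.sqrt D) / 2 with hy₀def
  have hroot : y₀^2 - c*y₀ + 2*(A*B) = 0 := by
    rw [hy₀def]
    linear_combination hsqD / 4 - hDdef / 4
  have hAy₀ : A < y₀ := by
    by_contra h
    push_neg at h
    rw [hy₀def] at h
    have h2 : (A - (c + Real.sqrt D)/2) * (A - (c - Real.sqrt D)/2)
        = A^2 - c*A + 2*(A*B) := by
      linear_combination (-1/4 : ℝ) * hsqD + hDdef / 4
    linarith [h2, hquadA, sq_nonneg (A - (c + Real.sqrt D)/2),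
      mul_nonneg hsqD0 (sub_nonneg.2 h)]
  have hy₀0 : 0 < y₀ := lt_trans hA0 hAy₀
  have hBy₀ : B < y₀ := by linarith
  have hs_ne : Real.sqrt 5 ≠ 0 := ne_of_gt hs_pos
  refine ⟨D, y₀, by rw [hDdef, hAB], hD, hy₀def, hAy₀, ?_, ?_⟩
  · have h := sum_aux p hp y₀ (by rw [← hAdef]; exact hAy₀)
    rw [← hAdef, ← hBdef] at h
    have hTv : Real.goldenRatio / Real.sqrt 5 * (1 - A / y₀)⁻¹
        - Real.goldenConj / Real.sqrt 5 * (1 - B / y₀)⁻¹ = 2 :=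
      Tval _ _ _ A B Fr c y₀ hsub hFr hcval hroot
        (sub_pos.2 hAy₀).ne' (sub_pos.2 hBy₀).ne' hy₀0.ne' hs_ne
    rwa [hTv] at h
  · intro z hzA' hsumz
    have hsq := sum_aux p hp z (by rw [← hAdef]; linarith)
    rw [← hAdef, ← hBdef] at hsq
    have hTq : Real.goldenRatio / Real.sqrt 5 * (1 - A / z)⁻¹
        - Real.goldenConj / Real.sqrt 5 * (1 - B / z)⁻¹ = 2 := hsq.unique hsumz
    have hzB : B < z := by linarith
    have hz0 : (0:ℝ) < z := lt_trans hA0 hzA'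
    have hquadq : z^2 - c*z + 2*(A*B) = 0 :=
      Tval_inv _ _ _ A B Fr c z hsub hFr hcval hTq
        (sub_pos.2 hzA').ne' (sub_pos.2 hzB).ne' hz0.ne' hs_ne
    have hfact : (z - y₀) * (z - (c - Real.sqrt D)/2) = 0 := by
      rw [hy₀def]
      linear_combination hquadq - hsqD/4 + hDdef/4
    rcases mul_eq_zero.1 hfact with h | h
    · linarith [sub_eq_zero.1 h]
    · exfalso
      have heq : (A - y₀) * (A - (c - Real.sqrt D)/2) = A^2 - c*A + 2*(A*B) := by
        rw [hy₀def]
        linear_combination (-1/4 : ℝ) * hsqD + hDdef / 4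
      have hy1A : (c - Real.sqrt D)/2 < A := by
        by_contra hcc
        push_neg at hcc
        have hm : 0 ≤ (y₀ - A) * ((c - Real.sqrt D)/2 - A) :=
          mul_nonneg (by linarith) (by linarith)
        linarith [heq, hquadA, hm]
      have := sub_eq_zero.1 h
      linarith

theorem stmt16 (p : ℕ) (hp : 2 ≤ p) :
    let c : ℝ := (fib1 (p - 2) : ℝ) + 2 * (fib1 p : ℝ)
    let qp : ℝ :=
      if Even p then (c / 2 + Real.sqrt (c ^ 2 - 8) / 2) ^ ((1 : ℝ) / p)
      else (c / 2 + Real.sqrt (c ^ 2 + 8) / 2) ^ ((1 : ℝ) / p)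
    phi < qp ∧
    HasSum (fun k => (fib1 (p * k) : ℝ) / qp ^ (p * k)) 2 ∧
    ∀ q : ℝ, phi < q → HasSum (fun k => (fib1 (p * k) : ℝ) / q ^ (p * k)) 2 → q = qp := by
  intro c qp
  have hqpdef : qp = if Even p then (c / 2 + Real.sqrt (c ^ 2 - 8) / 2) ^ ((1 : ℝ) / p)
      else (c / 2 + Real.sqrt (c ^ 2 + 8) / 2) ^ ((1 : ℝ) / p) := rfl
  obtain ⟨D, y₀, hDdef, hD, hy₀def, hAy₀, hsum, huniq⟩ := core p hp c rfl
  clear_value c qp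
  have hp0 : (p:ℝ) ≠ 0 := by positivity
  have hA0 : (0:ℝ) < Real.goldenRatio ^ p := by positivity
  have hy₀0 : 0 < y₀ := lt_trans hA0 hAy₀
  have hqp_eq : qp = y₀ ^ ((1:ℝ)/p) := by
    rw [hqpdef]
    rcases Nat.even_or_odd p with hpe | hpo
    · rw [if_pos hpe]
      have h1 : c^2 - 8 = D := by rw [hDdef, hpe.neg_one_pow]; ring
      rw [h1, hy₀def]
      congr 1
      ring
    · rw [if_neg (Nat.not_even_iff_odd.mpr hpo)]
      have h1 : c^2 + 8 = D := by rw [hDdef, hpo.neg_one_pow]; ring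
      rw [h1, hy₀def]
      congr 1
      ring
  have hqpp : qp ^ p = y₀ := by
    rw [hqp_eq, ← Real.rpow_natCast (y₀ ^ ((1:ℝ)/p)) p, ← Real.rpow_mul hy₀0.le,
      one_div, inv_mul_cancel₀ hp0, Real.rpow_one]
  have hphiqp : phi < qp := by
    have h2 : Real.goldenRatio = (Real.goldenRatio ^ p) ^ ((1:ℝ)/p) := by
      rw [← Real.rpow_natCast Real.goldenRatio p, ← Real.rpow_mul Real.goldenRatio_pos.le,
        mul_one_div, div_self hp0, Real.rpow_one]
    show Real.goldenRatio < qp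
    rw [hqp_eq]
    nth_rewrite 1 [h2]
    exact Real.rpow_lt_rpow hA0.le hAy₀ (by positivity)
  refine ⟨hphiqp, by simpa only [pow_mul, hqpp] using hsum, ?_⟩
  intro q hq hsumq
  have hq' : Real.goldenRatio < q := hq
  have hq0 : (0:ℝ) < q := lt_trans Real.goldenRatio_pos hq'
  have hzA : Real.goldenRatio ^ p < q ^ p := pow_lt_pow_left₀ hq' Real.goldenRatio_pos.le (by omega)
  simp only [pow_mul] at hsumq
  have hzy₀ : q ^ p = y₀ := huniq (q ^ p) hzA hsumq
  have hqval : q = (q ^ p : ℝ) ^ ((1:ℝ)/p) := by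
    rw [← Real.rpow_natCast q p, ← Real.rpow_mul hq0.le,
      mul_one_div, div_self hp0, Real.rpow_one]
  rw [hqp_eq, ← hzy₀, ← hqval]
end
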